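/- arXiv:1902.06275 — 2 statements merged into one kernel-verified Lean document; each statement's English description precedes it below -/
import Mathlib

section
/- The map f is adjacency-reducing for the (ℓ,r)-0-insertion channel: for any two strings x, y ∈ S_q(n), if f(x) and f(y) are confusable in the (ℓ,r)-0-insertion channel, then x and y are confusable as well. Equivalently, if x and y are non-confusable then so are f(x) and f(y). -/
/-!
A string with nonzero first symbol is a sequence of blocks `a 0^u` with `a ≠ 0`, and the channel
acts on each block separately, turning the run `u` into `u + mℓ` with `m ≤ r(u+1)`. So two such
strings are confusable iff they carry the same nonzero symbols and corresponding runs `u, v` satisfy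
`u ≡ v (mod ℓ)`, `v + 1 ≤ (rℓ+1)(u+1)` and `u + 1 ≤ (rℓ+1)(v+1)`.

In the residue class of `i - 1` the reduced lengths obey `r(L(i,j)+1)+1 = (ri+1)(rℓ+1)^j`, a geometric
progression of ratio `rℓ+1`; two of its members satisfying the inequalities above must coincide.
Moreover `g u ≤ u` and `u + 1 ≤ (rℓ+1)(g u + 1)`, by maximality of `g u`. Hence if the runs
`g u, g v` are compatible then `g u = g v`, and the inequalities for `u, v` follow.
-/

namespace ZeroErrorDup

/-- Output relation of the (ℓ,r)-0-insertion channel acting on strings over the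
alphabet A_q = {0,1,…,q−1} (encoded as lists of naturals): after each input symbol,
`c` copies of the block `0^ℓ` are inserted, for some `c ∈ {0,1,…,r}`. -/
inductive IsOutput (ℓ r : ℕ) : List ℕ → List ℕ → Prop
  | nil : IsOutput ℓ r [] []
  | cons (a : ℕ) (c : ℕ) (hc : c ≤ r) {x y : List ℕ} :
      IsOutput ℓ r x y → IsOutput ℓ r (a :: x) (a :: (List.replicate (c * ℓ) 0 ++ y))

/-- Two strings are confusable if some string is an output of both. -/
def Confusable (ℓ r : ℕ) (x y : List ℕ) : Prop :=
  ∃ z, IsOutput ℓ r x z ∧ IsOutput ℓ r y z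

/-- A set of strings is a zero-error code if every two distinct elements are
non-confusable. -/
def ZeroErrorCode (ℓ r : ℕ) (C : Set (List ℕ)) : Prop :=
  ∀ x ∈ C, ∀ y ∈ C, x ≠ y → ¬ Confusable ℓ r x y

/-- `L ℓ r i j = ((r i + 1)(r ℓ + 1)^j − 1)/r − 1` (the division is exact). -/
def L (ℓ r i j : ℕ) : ℕ := ((r * i + 1) * (r * ℓ + 1) ^ j - 1) / r - 1

/-- `S q n`: strings over `A_q` of length between 1 and `n` whose first symbol is nonzero. -/
def S (q n : ℕ) : Set (List ℕ) :=
  { x | x ≠ [] ∧ x.length ≤ n ∧ (∀ a ∈ x, a < q) ∧ x.headI ≠ 0 }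

/-- Reduced run length: the largest integer of the form `L ℓ r i j` (with `1 ≤ i ≤ ℓ`,
`j ≥ 0`) that is at most `u` and congruent to `u` modulo `ℓ` (such an integer always
exists). -/
noncomputable def g (ℓ r u : ℕ) : ℕ :=
  sSup { m | (∃ i j : ℕ, 1 ≤ i ∧ i ≤ ℓ ∧ m = L ℓ r i j) ∧ m ≤ u ∧ m % ℓ = u % ℓ }

/-- The map `f`, shortening each maximal run of zeros of length `u` to length `g ℓ r u`
and leaving all nonzero symbols in place. -/
noncomputable def f (ℓ r : ℕ) (x : List ℕ) : List ℕ :=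
  match h : x.dropWhile (· == 0) with
  | [] => List.replicate (g ℓ r (x.takeWhile (· == 0)).length) 0
  | a :: t =>
      List.replicate (g ℓ r (x.takeWhile (· == 0)).length) 0 ++ a :: f ℓ r t
termination_by x.length
decreasing_by
  have h1 : (x.dropWhile (· == 0)).length ≤ x.length :=
    (List.dropWhile_sublist _).length_le
  rw [h] at h1
  simp only [List.length_cons] at h1
  omega

lemma exists_forall₂_forall₂_iff {α β γ : Type*} {R : α → γ → Prop} {S : β → γ → Prop}
    {l₁ : List α} {l₂ : List β} :
    (∃ l, List.Forall₂ R l₁ l ∧ List.Forall₂ S l₂ l) ↔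
      List.Forall₂ (fun a b => ∃ c, R a c ∧ S b c) l₁ l₂ := by
  induction l₁ generalizing l₂ with
  | nil => cases l₂ <;> simp
  | cons a l₁ ih =>
    cases l₂ with
    | nil => simp
    | cons b l₂ =>
      rw [List.forall₂_cons, ← ih]
      constructor
      · rintro ⟨_ | ⟨c, l⟩, h₁, h₂⟩
        · cases h₁
        · rw [List.forall₂_cons] at h₁ h₂
          exact ⟨⟨c, h₁.1, h₂.1⟩, l, h₁.2, h₂.2⟩
      · rintro ⟨⟨c, hac, hbc⟩, l, hl₁, hl₂⟩
        exact ⟨c :: l, .cons hac hl₁, .cons hbc hl₂⟩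

section

open List

variable {ℓ r : ℕ}

lemma L_spec (hr : 1 ≤ r) {i : ℕ} (hi : 1 ≤ i) (j : ℕ) :
    r * (L ℓ r i j + 1) + 1 = (r * i + 1) * (r * ℓ + 1) ^ j := by
  set X := (r * i + 1) * (r * ℓ + 1) ^ j
  have hX : r + 1 ≤ X :=
    calc r + 1 ≤ r * i + 1 := by nlinarith
      _ ≤ X := Nat.le_mul_of_pos_right _ (by positivity)
  have hmod : 1 ≡ X [MOD r] := by
    have hi : 1 ≡ r * i + 1 [MOD r] := (Nat.modEq_iff_dvd' (by omega)).2 ⟨i, by omega⟩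
    have hℓ : 1 ≡ r * ℓ + 1 [MOD r] := (Nat.modEq_iff_dvd' (by omega)).2 ⟨ℓ, by omega⟩
    simpa using hi.mul (hℓ.pow j)
  obtain ⟨k, hk⟩ := (Nat.modEq_iff_dvd' (by omega)).1 hmod
  have hk1 : 1 ≤ k := by
    by_contra hk0
    simp only [show k = 0 by omega, mul_zero] at hk
    omega
  change r * ((X - 1) / r - 1 + 1) + 1 = X
  rw [hk, Nat.mul_div_cancel_left k (by omega), Nat.sub_add_cancel hk1]
  omega

lemma L_zero (hr : 1 ≤ r) {i : ℕ} (hi : 1 ≤ i) : L ℓ r i 0 = i - 1 := by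
  have h := L_spec (ℓ := ℓ) hr hi 0
  rw [pow_zero, mul_one, add_left_inj] at h
  have := Nat.eq_of_mul_eq_mul_left (by omega) h
  omega

lemma L_succ (hr : 1 ≤ r) {i : ℕ} (hi : 1 ≤ i) (j : ℕ) :
    r * (L ℓ r i (j + 1) + 1) + 1 = (r * ℓ + 1) * (r * (L ℓ r i j + 1) + 1) := by
  rw [L_spec hr hi, L_spec hr hi, pow_succ]
  ring

lemma L_mod (hr : 1 ≤ r) {i : ℕ} (hi : 1 ≤ i) (hiℓ : i ≤ ℓ) (j : ℕ) :
    L ℓ r i j % ℓ = i - 1 := by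
  have hb : r * ℓ + 1 ≡ 1 [MOD r * ℓ] := ((Nat.modEq_iff_dvd' (by omega)).2 ⟨1, by omega⟩).symm
  have h : r * (L ℓ r i j + 1) + 1 ≡ r * i + 1 [MOD r * ℓ] := by
    rw [L_spec hr hi]
    simpa using (Nat.ModEq.refl (r * i + 1)).mul (hb.pow j)
  have h' : L ℓ r i j + 1 ≡ i - 1 + 1 [MOD ℓ] := by
    rw [Nat.sub_add_cancel hi]
    exact Nat.ModEq.mul_left_cancel' (by omega) (Nat.ModEq.add_right_cancel' 1 h)
  rw [Nat.ModEq.add_right_cancel' 1 h', Nat.mod_eq_of_lt (by omega)]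

lemma le_of_L_succ_le_mul (hr : 1 ≤ r) (hℓ : 1 ≤ ℓ) {i j k : ℕ} (hi : 1 ≤ i)
    (h : L ℓ r i j + 1 ≤ (r * ℓ + 1) * (L ℓ r i k + 1)) : j ≤ k := by
  have hlt : (r * i + 1) * (r * ℓ + 1) ^ j < (r * i + 1) * (r * ℓ + 1) ^ (k + 1) := by
    rw [← L_spec hr hi, ← L_spec hr hi, L_succ hr hi]
    have : 1 ≤ r * ℓ := Nat.one_le_iff_ne_zero.2 (by positivity)
    nlinarith
  have := (Nat.pow_lt_pow_iff_right (by nlinarith)).1 (Nat.lt_of_mul_lt_mul_left hlt)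
  omega

lemma g_le (u : ℕ) : g ℓ r u ≤ u :=
  csSup_le' fun _ hm => hm.2.1

lemma le_g {u m : ℕ} (hm : (∃ i j : ℕ, 1 ≤ i ∧ i ≤ ℓ ∧ m = L ℓ r i j) ∧ m ≤ u ∧ m % ℓ = u % ℓ) :
    m ≤ g ℓ r u :=
  le_csSup ⟨u, fun _ hm => hm.2.1⟩ hm

lemma g_mem (hr : 1 ≤ r) (hℓ : 1 ≤ ℓ) (u : ℕ) :
    g ℓ r u ∈ {m | (∃ i j : ℕ, 1 ≤ i ∧ i ≤ ℓ ∧ m = L ℓ r i j) ∧ m ≤ u ∧ m % ℓ = u % ℓ} := by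
  have hlt := Nat.mod_lt u (show 0 < ℓ by omega)
  refine Nat.sSup_mem ⟨u % ℓ, ⟨u % ℓ + 1, 0, by omega, by omega, ?_⟩, Nat.mod_le u ℓ,
    Nat.mod_mod u ℓ⟩ ⟨u, fun _ hm => hm.2.1⟩
  rw [L_zero hr (by omega), Nat.add_sub_cancel]

lemma g_mod (hr : 1 ≤ r) (hℓ : 1 ≤ ℓ) (u : ℕ) : g ℓ r u % ℓ = u % ℓ :=
  (g_mem hr hℓ u).2.2

lemma exists_g_eq_L (hr : 1 ≤ r) (hℓ : 1 ≤ ℓ) (u : ℕ) :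
    ∃ j, g ℓ r u = L ℓ r (u % ℓ + 1) j := by
  obtain ⟨⟨i, j, hi, hiℓ, hg⟩, -, hmod⟩ := g_mem hr hℓ u
  have := L_mod hr hi hiℓ j
  rw [← hg] at this
  exact ⟨j, by rw [hg, show i = u % ℓ + 1 by omega]⟩

lemma succ_le_mul_g_succ (hr : 1 ≤ r) (hℓ : 1 ≤ ℓ) (u : ℕ) :
    u + 1 ≤ (r * ℓ + 1) * (g ℓ r u + 1) := by
  obtain ⟨j, hj⟩ := exists_g_eq_L hr hℓ u
  have hi : u % ℓ + 1 ≤ ℓ := Nat.mod_lt u (by omega)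
  set M := L ℓ r (u % ℓ + 1) (j + 1)
  have hM : r * (M + 1) + 1 = (r * ℓ + 1) * (r * (g ℓ r u + 1) + 1) := by
    rw [hj]; exact L_succ hr (by omega) j
  have hMmod : M % ℓ = u % ℓ := by rw [L_mod hr (by omega) hi]; omega
  have hlt : u < M := by
    by_contra! hle
    have hMg : M ≤ g ℓ r u := le_g ⟨⟨u % ℓ + 1, j + 1, by omega, hi, rfl⟩, hle, hMmod⟩
    have : 1 ≤ r * ℓ := Nat.one_le_iff_ne_zero.2 (by positivity)
    nlinarith [Nat.mul_le_mul_left r hMg, Nat.mul_le_mul_right (r * (g ℓ r u + 1) + 1) this]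
  have hgap : u + ℓ ≤ M := by
    have hdvd : ℓ ∣ M - u := (Nat.modEq_iff_dvd' hlt.le).1 hMmod.symm
    have := Nat.le_of_dvd (by omega) hdvd
    omega
  have : r * (u + 1) ≤ r * ((r * ℓ + 1) * (g ℓ r u + 1)) := by nlinarith
  exact Nat.le_of_mul_le_mul_left this (by omega)

lemma g_eq_g_of_le_of_le (hr : 1 ≤ r) (hℓ : 1 ≤ ℓ) {u v : ℕ} (hmod : u % ℓ = v % ℓ)
    (huv : g ℓ r v + 1 ≤ (r * ℓ + 1) * (g ℓ r u + 1))
    (hvu : g ℓ r u + 1 ≤ (r * ℓ + 1) * (g ℓ r v + 1)) : g ℓ r u = g ℓ r v := by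
  obtain ⟨ju, hju⟩ := exists_g_eq_L hr hℓ u
  obtain ⟨jv, hjv⟩ := exists_g_eq_L hr hℓ v
  rw [← hmod] at hjv
  rw [hju, hjv] at huv hvu ⊢
  rw [le_antisymm (le_of_L_succ_le_mul hr hℓ (by omega) hvu)
    (le_of_L_succ_le_mul hr hℓ (by omega) huv)]

/-- Each of the `u + 1` symbols of a block `a 0^u` receives at most `r` copies of `0^ℓ`. -/
def RunOutput (ℓ r u w : ℕ) : Prop := ∃ m ≤ r * (u + 1), w = u + m * ℓ

def RunsConfusable (ℓ r u v : ℕ) : Prop := ∃ w, RunOutput ℓ r u w ∧ RunOutput ℓ r v w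

lemma runOutput_of_le {u v : ℕ} (hmod : u % ℓ = v % ℓ) (huv : u ≤ v)
    (h : v + 1 ≤ (r * ℓ + 1) * (u + 1)) : RunOutput ℓ r u v := by
  have hdvd : ℓ ∣ v - u := (Nat.modEq_iff_dvd' huv).1 hmod
  refine ⟨(v - u) / ℓ, Nat.div_le_of_le_mul ?_, by rw [Nat.div_mul_cancel hdvd]; omega⟩
  have : (r * ℓ + 1) * (u + 1) = ℓ * (r * (u + 1)) + (u + 1) := by ring
  omega

lemma runsConfusable_iff {u v : ℕ} :
    RunsConfusable ℓ r u v ↔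
      u % ℓ = v % ℓ ∧ v + 1 ≤ (r * ℓ + 1) * (u + 1) ∧ u + 1 ≤ (r * ℓ + 1) * (v + 1) := by
  constructor
  · rintro ⟨w, ⟨m, hm, rfl⟩, ⟨m', hm', hw⟩⟩
    have hmℓ := Nat.mul_le_mul_right ℓ hm
    have hm'ℓ := Nat.mul_le_mul_right ℓ hm'
    refine ⟨by simpa using congrArg (· % ℓ) hw, ?_, ?_⟩ <;> nlinarith
  · rintro ⟨hmod, huv, hvu⟩
    rcases le_total u v with h | h
    · exact ⟨v, runOutput_of_le hmod h huv, 0, Nat.zero_le _, by simp⟩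
    · exact ⟨u, ⟨0, Nat.zero_le _, by simp⟩, runOutput_of_le hmod.symm h hvu⟩

theorem runsConfusable_of_g (hr : 1 ≤ r) (hℓ : 1 ≤ ℓ) {u v : ℕ}
    (h : RunsConfusable ℓ r (g ℓ r u) (g ℓ r v)) : RunsConfusable ℓ r u v := by
  obtain ⟨hmod, huv, hvu⟩ := runsConfusable_iff.1 h
  rw [g_mod hr hℓ, g_mod hr hℓ] at hmod
  have hg := g_eq_g_of_le_of_le hr hℓ hmod huv hvu
  refine runsConfusable_iff.2 ⟨hmod, ?_, ?_⟩
  · calc v + 1 ≤ (r * ℓ + 1) * (g ℓ r v + 1) := succ_le_mul_g_succ hr hℓ v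
      _ ≤ (r * ℓ + 1) * (u + 1) := by rw [← hg]; gcongr; exact g_le u
  · calc u + 1 ≤ (r * ℓ + 1) * (g ℓ r u + 1) := succ_le_mul_g_succ hr hℓ u
      _ ≤ (r * ℓ + 1) * (v + 1) := by rw [hg]; gcongr; exact g_le v

/-- `(a, u)` stands for the block `a 0^u`. -/
def ofBlocks : List (ℕ × ℕ) → List ℕ
  | [] => []
  | p :: ps => p.1 :: (replicate p.2 0 ++ ofBlocks ps)

def BlockOutput (ℓ r : ℕ) (p t : ℕ × ℕ) : Prop := t.1 = p.1 ∧ RunOutput ℓ r p.2 t.2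

lemma isOutput_nil_iff {z : List ℕ} : IsOutput ℓ r [] z ↔ z = [] :=
  ⟨fun h => by cases h; rfl, by rintro rfl; exact .nil⟩

lemma isOutput_cons_iff {a : ℕ} {x z : List ℕ} :
    IsOutput ℓ r (a :: x) z ↔
      ∃ c ≤ r, ∃ z', IsOutput ℓ r x z' ∧ z = a :: (replicate (c * ℓ) 0 ++ z') := by
  constructor
  · rintro (_ | ⟨_, c, hc, h⟩)
    exact ⟨c, hc, _, h, rfl⟩
  · rintro ⟨c, hc, z', h, rfl⟩
    exact .cons a c hc h

lemma isOutput_block_iff {a u : ℕ} {x z : List ℕ} :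
    IsOutput ℓ r (a :: (replicate u 0 ++ x)) z ↔
      ∃ m ≤ r * (u + 1), ∃ z', IsOutput ℓ r x z' ∧ z = a :: (replicate (u + m * ℓ) 0 ++ z') := by
  induction u generalizing a z with
  | zero => simp [isOutput_cons_iff]
  | succ u ih =>
    have hmerge (c m : ℕ) (z' : List ℕ) : replicate (c * ℓ) 0 ++ 0 :: (replicate (u + m * ℓ) 0 ++ z')
        = replicate (u + 1 + (c + m) * ℓ) 0 ++ z' := by
      rw [← cons_append, ← replicate_succ, ← append_assoc, ← replicate_add]
      congr 1
      ring_nf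
    rw [replicate_succ, cons_append, isOutput_cons_iff]
    simp_rw [ih]
    constructor
    · rintro ⟨c, hc, _, ⟨m, hm, z', hx, rfl⟩, rfl⟩
      exact ⟨c + m, by linarith, z', hx, by rw [hmerge]⟩
    · rintro ⟨m, hm, z', hx, rfl⟩
      refine ⟨min m r, min_le_right m r, _, ⟨m - min m r, ?_, z', hx, rfl⟩, ?_⟩
      · have : r * (u + 1 + 1) = r * (u + 1) + r := by ring
        omega
      · rw [hmerge, Nat.add_sub_cancel' (min_le_left m r)]

lemma isOutput_ofBlocks_iff {ps : List (ℕ × ℕ)} {z : List ℕ} :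
    IsOutput ℓ r (ofBlocks ps) z ↔ ∃ ts, Forall₂ (BlockOutput ℓ r) ps ts ∧ z = ofBlocks ts := by
  induction ps generalizing z with
  | nil => simp [ofBlocks, isOutput_nil_iff]
  | cons p ps ih =>
    simp only [ofBlocks, isOutput_block_iff, ih, forall₂_cons_left_iff]
    constructor
    · rintro ⟨m, hm, _, ⟨ts, hts, rfl⟩, rfl⟩
      exact ⟨_, ⟨(p.1, p.2 + m * ℓ), ts, ⟨rfl, m, hm, rfl⟩, hts, rfl⟩, rfl⟩
    · rintro ⟨_, ⟨t, ts, ⟨ht1, m, hm, ht2⟩, hts, rfl⟩, rfl⟩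
      exact ⟨m, hm, _, ⟨ts, hts, rfl⟩, by simp [ofBlocks, ht1, ht2]⟩

lemma takeWhile_replicate_append {u : ℕ} {s : List ℕ} (hs : s.head? ≠ some 0) :
    (replicate u 0 ++ s).takeWhile (· == 0) = replicate u 0 := by
  rw [takeWhile_append_of_pos (by simp)]
  cases s <;> simp_all

lemma dropWhile_replicate_append {u : ℕ} {s : List ℕ} (hs : s.head? ≠ some 0) :
    (replicate u 0 ++ s).dropWhile (· == 0) = s := by
  rw [dropWhile_append_of_pos (by simp)]
  cases s <;> simp_all

lemma head?_ofBlocks_ne_zero {ps : List (ℕ × ℕ)} (hps : ∀ p ∈ ps, p.1 ≠ 0) :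
    (ofBlocks ps).head? ≠ some 0 := by
  cases ps <;> simp_all [ofBlocks]

lemma ofBlocks_injective {ps qs : List (ℕ × ℕ)} (hps : ∀ p ∈ ps, p.1 ≠ 0)
    (hqs : ∀ q ∈ qs, q.1 ≠ 0) (h : ofBlocks ps = ofBlocks qs) : ps = qs := by
  induction ps generalizing qs with
  | nil => cases qs <;> simp_all [ofBlocks]
  | cons p ps ih =>
    cases qs with
    | nil => simp [ofBlocks] at h
    | cons q qs =>
      simp only [ofBlocks, cons.injEq] at h
      obtain ⟨h1, h2⟩ := h
      simp only [mem_cons, forall_eq_or_imp] at hps hqs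
      have hs := head?_ofBlocks_ne_zero hps.2
      have ht := head?_ofBlocks_ne_zero hqs.2
      have h3 := congrArg (fun s => (s.takeWhile (· == 0)).length) h2
      have h4 := congrArg (·.dropWhile (· == 0)) h2
      simp only [takeWhile_replicate_append hs, takeWhile_replicate_append ht, length_replicate,
        dropWhile_replicate_append hs, dropWhile_replicate_append ht] at h3 h4
      rw [Prod.ext h1 h3, ih hps.2 hqs.2 h4]

lemma exists_replicate_append_ofBlocks (s : List ℕ) :
    ∃ u ps, (∀ p ∈ ps, p.1 ≠ 0) ∧ s = replicate u 0 ++ ofBlocks ps := by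
  induction s with
  | nil => exact ⟨0, [], by simp, rfl⟩
  | cons a s ih =>
    obtain ⟨u, ps, hps, rfl⟩ := ih
    by_cases ha : a = 0
    · exact ⟨u + 1, ps, hps, by simp [ha, replicate_succ]⟩
    · refine ⟨0, (a, u) :: ps, ?_, rfl⟩
      simpa [ha] using hps

lemma exists_ofBlocks {s : List ℕ} (hs : s.head? ≠ some 0) :
    ∃ ps, (∀ p ∈ ps, p.1 ≠ 0) ∧ s = ofBlocks ps := by
  obtain ⟨u, ps, hps, rfl⟩ := exists_replicate_append_ofBlocks s
  cases u with
  | zero => exact ⟨ps, hps, by simp⟩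
  | succ u => simp [replicate_succ] at hs

lemma f_replicate (u : ℕ) : f ℓ r (replicate u 0) = replicate (g ℓ r u) 0 := by
  rw [f]
  split
  · simp
  · simp_all

lemma f_replicate_append_cons {u a : ℕ} (ha : a ≠ 0) (t : List ℕ) :
    f ℓ r (replicate u 0 ++ a :: t) = replicate (g ℓ r u) 0 ++ a :: f ℓ r t := by
  have hs : (a :: t).head? ≠ some 0 := by simpa using ha
  rw [f]
  split
  · simp_all [dropWhile_replicate_append hs]
  · simp_all [dropWhile_replicate_append hs]

lemma f_replicate_append_ofBlocks (u : ℕ) {ps : List (ℕ × ℕ)} (hps : ∀ p ∈ ps, p.1 ≠ 0) :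
    f ℓ r (replicate u 0 ++ ofBlocks ps) =
      replicate (g ℓ r u) 0 ++ ofBlocks (ps.map fun p => (p.1, g ℓ r p.2)) := by
  induction ps generalizing u with
  | nil => simp [ofBlocks, f_replicate]
  | cons p ps ih =>
    simp only [mem_cons, forall_eq_or_imp] at hps
    simp only [ofBlocks, map_cons, f_replicate_append_cons hps.1, ih _ hps.2]

lemma f_ofBlocks {ps : List (ℕ × ℕ)} (hps : ∀ p ∈ ps, p.1 ≠ 0) :
    f ℓ r (ofBlocks ps) = ofBlocks (ps.map fun p => (p.1, g ℓ r p.2)) := by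
  simpa [Nat.le_zero.1 (g_le 0)] using f_replicate_append_ofBlocks (ℓ := ℓ) (r := r) 0 hps

lemma forall₂_blockOutput_fst {ps ts : List (ℕ × ℕ)} (h : Forall₂ (BlockOutput ℓ r) ps ts)
    (hps : ∀ p ∈ ps, p.1 ≠ 0) : ∀ t ∈ ts, t.1 ≠ 0 := by
  induction h with
  | nil => simp
  | cons hpt _ ih =>
    simp only [mem_cons, forall_eq_or_imp] at hps ⊢
    exact ⟨hpt.1 ▸ hps.1, ih hps.2⟩

theorem confusable_ofBlocks_iff {ps qs : List (ℕ × ℕ)} (hps : ∀ p ∈ ps, p.1 ≠ 0)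
    (hqs : ∀ q ∈ qs, q.1 ≠ 0) :
    Confusable ℓ r (ofBlocks ps) (ofBlocks qs) ↔
      Forall₂ (fun p q => p.1 = q.1 ∧ RunsConfusable ℓ r p.2 q.2) ps qs := by
  have hblock (p q : ℕ × ℕ) : (∃ t, BlockOutput ℓ r p t ∧ BlockOutput ℓ r q t) ↔
      p.1 = q.1 ∧ RunsConfusable ℓ r p.2 q.2 := by
    constructor
    · rintro ⟨t, ⟨hp, hpt⟩, ⟨hq, hqt⟩⟩
      exact ⟨hp.symm.trans hq, t.2, hpt, hqt⟩
    · rintro ⟨h1, w, hpw, hqw⟩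
      exact ⟨(p.1, w), ⟨rfl, hpw⟩, ⟨h1, hqw⟩⟩
  simp_rw [← hblock, ← exists_forall₂_forall₂_iff]
  constructor
  · rintro ⟨z, hpz, hqz⟩
    obtain ⟨ts, hts, rfl⟩ := isOutput_ofBlocks_iff.1 hpz
    obtain ⟨ts', hts', hz⟩ := isOutput_ofBlocks_iff.1 hqz
    obtain rfl := ofBlocks_injective (forall₂_blockOutput_fst hts hps)
      (forall₂_blockOutput_fst hts' hqs) hz
    exact ⟨ts, hts, hts'⟩
  · rintro ⟨ts, hts, hts'⟩
    exact ⟨ofBlocks ts, isOutput_ofBlocks_iff.2 ⟨ts, hts, rfl⟩,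
      isOutput_ofBlocks_iff.2 ⟨ts, hts', rfl⟩⟩

end

theorem stmt8_general (q ℓ r n : ℕ) (hℓ : 1 ≤ ℓ) (hr : 1 ≤ r)
    (x y : List ℕ) (hx : x ∈ S q n) (hy : y ∈ S q n)
    (h : Confusable ℓ r (f ℓ r x) (f ℓ r y)) :
    Confusable ℓ r x y := by
  have head?_ne_zero {s : List ℕ} (hs : s ∈ S q n) : s.head? ≠ some 0 := by
    obtain ⟨hne, -, -, hhead⟩ := hs
    cases s <;> simp_all
  obtain ⟨px, hpx, rfl⟩ := exists_ofBlocks (head?_ne_zero hx)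
  obtain ⟨py, hpy, rfl⟩ := exists_ofBlocks (head?_ne_zero hy)
  have hmap {ps : List (ℕ × ℕ)} (hps : ∀ p ∈ ps, p.1 ≠ 0) :
      ∀ p ∈ ps.map (fun p => (p.1, g ℓ r p.2)), p.1 ≠ 0 := by
    simpa only [List.forall_mem_map] using hps
  rw [f_ofBlocks hpx, f_ofBlocks hpy, confusable_ofBlocks_iff (hmap hpx) (hmap hpy),
    List.forall₂_map_left_iff, List.forall₂_map_right_iff] at h
  exact (confusable_ofBlocks_iff hpx hpy).2
    (h.imp fun _ _ hpq => ⟨hpq.1, runsConfusable_of_g hr hℓ hpq.2⟩)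

/-- `f` is adjacency-reducing for the (ℓ,r)-0-insertion channel: for
`x, y ∈ S q n`, if `f x` and `f y` are confusable then so are `x` and `y`. -/
theorem stmt8 (q ℓ r n : ℕ) (hq : 2 ≤ q) (hℓ : 1 ≤ ℓ) (hr : 1 ≤ r)
    (x y : List ℕ) (hx : x ∈ S q n) (hy : y ∈ S q n)
    (h : Confusable ℓ r (f ℓ r x) (f ℓ r y)) :
    Confusable ℓ r x y :=
  stmt8_general q ℓ r n hℓ hr x y hx hy h

end ZeroErrorDup
end

section
/- The equation v_{q,ℓ,r}(x) = 1 has exactly one solution ρ in the interval (0,1) (and the series defining v_{q,ℓ,r} converges there); moreover this solution satisfies 1/q ≤ ρ ≤ 1/(q−1). -/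
/-! The exponents `L ℓ r i j + 1 = ((r i + 1)(r ℓ + 1)^j - 1)/r` are at least `j + 1` and pairwise
distinct, because `c · Bʲ` with `1 < c ≤ B` determines `c` and `j`. Hence `v / (q - 1)` is a
sub-series of `∑_{n ≥ 1} xⁿ = x / (1 - x)` containing the term `x`, so
`(q - 1) x ≤ v x ≤ (q - 1) x / (1 - x)`; in particular `v (1/q) ≤ 1`. Since `v` is continuous and
strictly increasing on `[0, 1)` and exceeds `1` somewhere, the intermediate value theorem gives the
root, monotonicity its uniqueness and `1/q ≤ ρ`, and `(q - 1) ρ ≤ v ρ = 1` gives `ρ ≤ 1/(q - 1)`. -/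

namespace ZeroErrorDup

/-- The generating function `v_{q,ℓ,r}(x) = (q−1) Σ_{j=0}^∞ Σ_{i=1}^ℓ x^{L(i,j)+1}`. -/
noncomputable def v (q ℓ r : ℕ) (x : ℝ) : ℝ :=
  ((q : ℝ) - 1) * ∑' j : ℕ, ∑ i ∈ Finset.Icc 1 ℓ, x ^ (L ℓ r i j + 1)

lemma Nat.mul_pow_lt_mul_pow {B c c' j j' : ℕ} (hB : 0 < B) (hcB : c ≤ B) (hc' : 1 < c')
    (hj : j < j') : c * B ^ j < c' * B ^ j' :=
  calc c * B ^ j ≤ B * B ^ j := Nat.mul_le_mul_right _ hcB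
    _ = B ^ (j + 1) := (pow_succ' B j).symm
    _ ≤ B ^ j' := Nat.pow_le_pow_right hB hj
    _ < c' * B ^ j' := lt_mul_of_one_lt_left (pow_pos hB _) hc'

lemma Nat.eq_and_eq_of_mul_pow_eq {B c c' j j' : ℕ} (hc : 1 < c) (hcB : c ≤ B) (hc' : 1 < c')
    (hc'B : c' ≤ B) (h : c * B ^ j = c' * B ^ j') : j = j' ∧ c = c' := by
  have hB : 0 < B := by omega
  obtain hlt | rfl | hgt := lt_trichotomy j j'
  · exact absurd h (Nat.mul_pow_lt_mul_pow hB hcB hc' hlt).ne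
  · exact ⟨rfl, Nat.eq_of_mul_eq_mul_right (pow_pos hB _) h⟩
  · exact absurd h (Nat.mul_pow_lt_mul_pow hB hc'B hc hgt).ne'

section Exponents

variable {ℓ r : ℕ}

lemma L_add_one_spec (hr : 0 < r) {i : ℕ} (hi : 0 < i) (j : ℕ) :
    r * (L ℓ r i j + 1) + 1 = (r * i + 1) * (r * ℓ + 1) ^ j := by
  set N := (r * i + 1) * (r * ℓ + 1) ^ j
  have hmod : N ≡ 1 [MOD r] := by
    have h : ∀ m, r * m + 1 ≡ 1 [MOD r] := fun m => by simp [Nat.ModEq]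
    simpa using (h i).mul ((h ℓ).pow j)
  have hN : r + 1 ≤ N :=
    calc r + 1 ≤ r * i + 1 := by nlinarith
      _ ≤ N := Nat.le_mul_of_pos_right _ (by positivity)
  obtain ⟨k, hk⟩ := (Nat.modEq_iff_dvd' (by omega)).1 hmod.symm
  rcases k with _ | k
  · omega
  · rw [L, hk, Nat.mul_div_cancel_left _ hr, Nat.add_sub_cancel]
    omega

lemma L_one_zero (hr : 0 < r) : L ℓ r 1 0 = 0 := by
  simp [L, Nat.div_self hr]

lemma le_L (hr : 0 < r) (hℓ : 0 < ℓ) {i : ℕ} (hi : 0 < i) (j : ℕ) : j ≤ L ℓ r i j := by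
  have hbern : 1 + (j + 1) * r ≤ (1 + r) ^ (j + 1) :=
    one_add_mul_le_pow_of_sq_nonneg (Nat.zero_le _) (Nat.zero_le _) (Nat.zero_le _) _
  have hpow : (1 + r) ^ (j + 1) ≤ (r * i + 1) * (r * ℓ + 1) ^ j := by
    rw [pow_succ', add_comm 1 r]
    gcongr <;> nlinarith
  have := L_add_one_spec (ℓ := ℓ) hr hi j
  nlinarith

lemma L_injOn (hr : 0 < r) :
    Set.InjOn (fun p : ℕ × ℕ => L ℓ r p.1 p.2) (Set.Icc 1 ℓ ×ˢ Set.univ) := by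
  rintro ⟨i, j⟩ ⟨⟨hi, hiℓ⟩, -⟩ ⟨i', j'⟩ ⟨⟨hi', hi'ℓ⟩, -⟩ h
  have hspec : (r * i + 1) * (r * ℓ + 1) ^ j = (r * i' + 1) * (r * ℓ + 1) ^ j' := by
    rw [← L_add_one_spec hr hi, ← L_add_one_spec hr hi']
    exact congrArg (fun n => r * (n + 1) + 1) h
  obtain ⟨rfl, hii'⟩ := Nat.eq_and_eq_of_mul_pow_eq (by nlinarith) (by nlinarith) (by nlinarith)
    (by nlinarith) hspec
  simp only [Prod.mk.injEq, and_true]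
  exact Nat.eq_of_mul_eq_mul_left hr (by omega)

end Exponents

lemma summable_mul_pow_succ (a : ℝ) {c : ℝ} (hc0 : 0 ≤ c) (hc1 : c < 1) :
    Summable fun j : ℕ => a * c ^ (j + 1) :=
  ((summable_geometric_of_lt_one hc0 hc1).mul_left (a * c)).congr fun j => by ring

section Series

variable {q ℓ r : ℕ}

lemma sum_pow_L_le (hr : 0 < r) (hℓ : 0 < ℓ) {x c : ℝ} (hx0 : 0 ≤ x) (hxc : x ≤ c) (hc1 : c ≤ 1)
    (j : ℕ) : ∑ i ∈ Finset.Icc 1 ℓ, x ^ (L ℓ r i j + 1) ≤ ℓ * c ^ (j + 1) :=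
  calc ∑ i ∈ Finset.Icc 1 ℓ, x ^ (L ℓ r i j + 1) ≤ ∑ i ∈ Finset.Icc 1 ℓ, c ^ (j + 1) := by
        refine Finset.sum_le_sum fun i hi => ?_
        have hjL := le_L hr hℓ (Finset.mem_Icc.1 hi).1 j
        exact (pow_le_pow_of_le_one hx0 (hxc.trans hc1) (by omega)).trans
          (pow_le_pow_left₀ hx0 hxc _)
    _ = ℓ * c ^ (j + 1) := by simp

lemma summable_sum_pow_L (hr : 0 < r) (hℓ : 0 < ℓ) {x : ℝ} (hx0 : 0 ≤ x) (hx1 : x < 1) :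
    Summable fun j : ℕ => ∑ i ∈ Finset.Icc 1 ℓ, x ^ (L ℓ r i j + 1) :=
  (summable_mul_pow_succ ℓ hx0 hx1).of_nonneg_of_le
    (fun _ => Finset.sum_nonneg fun _ _ => pow_nonneg hx0 _)
    (sum_pow_L_le hr hℓ hx0 le_rfl hx1.le)

lemma continuousOn_v (hr : 0 < r) (hℓ : 0 < ℓ) {c : ℝ} (hc0 : 0 ≤ c) (hc1 : c < 1) :
    ContinuousOn (v q ℓ r) (Set.Icc 0 c) := by
  unfold v
  refine continuousOn_const.mul (continuousOn_tsum
    (fun j => (continuous_finsetSum _ fun i _ => continuous_pow _).continuousOn)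
    (summable_mul_pow_succ ℓ hc0 hc1) fun j x hx => ?_)
  rw [Real.norm_of_nonneg (Finset.sum_nonneg fun _ _ => pow_nonneg hx.1 _)]
  exact sum_pow_L_le hr hℓ hx.1 hx.2 hc1.le j

lemma strictMonoOn_v (hq : 1 < q) (hr : 0 < r) (hℓ : 0 < ℓ) :
    StrictMonoOn (v q ℓ r) (Set.Ico 0 1) := by
  rintro x ⟨hx0, -⟩ y ⟨hy0, hy1⟩ hxy
  refine mul_lt_mul_of_pos_left ?_ (sub_pos.2 (by exact_mod_cast hq))
  refine Summable.tsum_lt_tsum_of_nonneg (i := 0)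
    (fun _ => Finset.sum_nonneg fun _ _ => pow_nonneg hx0 _)
    (fun _ => Finset.sum_le_sum fun _ _ => pow_le_pow_left₀ hx0 hxy.le _) ?_
    (summable_sum_pow_L hr hℓ hy0 hy1)
  exact Finset.sum_lt_sum_of_nonempty ⟨1, Finset.mem_Icc.2 ⟨le_rfl, hℓ⟩⟩
    fun _ _ => pow_lt_pow_left₀ hxy hx0 (Nat.succ_ne_zero _)

-- The exponents `L ℓ r i j` are pairwise distinct, so the series is a sub-series of `x ∑ xⁿ`.
lemma tsum_sum_pow_L_le (hr : 0 < r) (hℓ : 0 < ℓ) {x : ℝ} (hx0 : 0 ≤ x) (hx1 : x < 1) :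
    ∑' j : ℕ, ∑ i ∈ Finset.Icc 1 ℓ, x ^ (L ℓ r i j + 1) ≤ x / (1 - x) := by
  refine (summable_sum_pow_L hr hℓ hx0 hx1).tsum_le_of_sum_le fun s => ?_
  have hinj : Set.InjOn (fun p : ℕ × ℕ => L ℓ r p.1 p.2) ↑(Finset.Icc 1 ℓ ×ˢ s) :=
    (L_injOn hr).mono fun p hp => by simp_all
  calc ∑ j ∈ s, ∑ i ∈ Finset.Icc 1 ℓ, x ^ (L ℓ r i j + 1)
      = x * ∑ p ∈ Finset.Icc 1 ℓ ×ˢ s, x ^ (L ℓ r p.1 p.2) := by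
        simp only [Finset.sum_product, Finset.mul_sum, pow_succ']
        exact Finset.sum_comm
    _ = x * ∑ n ∈ (Finset.Icc 1 ℓ ×ˢ s).image fun p => L ℓ r p.1 p.2, x ^ n := by
        rw [Finset.sum_image hinj]
    _ ≤ x * ∑' n, x ^ n := by
        gcongr
        exact Summable.sum_le_tsum _ (fun n _ => pow_nonneg hx0 n)
          (summable_geometric_of_lt_one hx0 hx1)
    _ = x / (1 - x) := by rw [tsum_geometric_of_lt_one hx0 hx1, div_eq_mul_inv]

lemma v_one_div_le_one (hq : 1 < q) (hr : 0 < r) (hℓ : 0 < ℓ) : v q ℓ r (1 / q) ≤ 1 := by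
  have hq' : (1 : ℝ) < q := by exact_mod_cast hq
  calc v q ℓ r (1 / q) ≤ ((q : ℝ) - 1) * ((1 / q) / (1 - 1 / q)) :=
        mul_le_mul_of_nonneg_left
          (tsum_sum_pow_L_le hr hℓ (by positivity) ((div_lt_one (by positivity)).2 hq'))
          (by linarith)
    _ = 1 := by
        field_simp
        rw [div_self (by linarith)]

lemma sum_pow_L_one_le_tsum (hr : 0 < r) (hℓ : 0 < ℓ) {x : ℝ} (hx0 : 0 ≤ x) (hx1 : x < 1)
    (s : Finset ℕ) :
    ∑ j ∈ s, x ^ (L ℓ r 1 j + 1) ≤ ∑' j : ℕ, ∑ i ∈ Finset.Icc 1 ℓ, x ^ (L ℓ r i j + 1) :=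
  (Finset.sum_le_sum fun j _ =>
    Finset.single_le_sum (f := fun i => x ^ (L ℓ r i j + 1)) (fun _ _ => pow_nonneg hx0 _)
    (Finset.mem_Icc.2 ⟨le_rfl, hℓ⟩)).trans
    (Summable.sum_le_tsum s (fun _ _ => Finset.sum_nonneg fun _ _ => pow_nonneg hx0 _)
      (summable_sum_pow_L hr hℓ hx0 hx1))

lemma mul_le_v (hq : 1 ≤ q) (hr : 0 < r) (hℓ : 0 < ℓ) {x : ℝ} (hx0 : 0 ≤ x) (hx1 : x < 1) :
    ((q : ℝ) - 1) * x ≤ v q ℓ r x :=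
  mul_le_mul_of_nonneg_left
    (by simpa [L_one_zero hr] using sum_pow_L_one_le_tsum hr hℓ hx0 hx1 {0})
    (sub_nonneg.2 (by exact_mod_cast hq))

-- Already the two terms `x + x ^ M` of the series reach `1` at `x = (1/2) ^ (1/M)`.
lemma exists_one_le_v (hq : 2 ≤ q) (hr : 0 < r) (hℓ : 0 < ℓ) :
    ∃ b ∈ Set.Ioo (0 : ℝ) 1, 1 ≤ v q ℓ r b := by
  set M := L ℓ r 1 1 + 1
  set b : ℝ := (1 / 2) ^ ((M : ℝ)⁻¹)
  have hbM : b ^ M = 1 / 2 := Real.rpow_inv_natCast_pow (by norm_num) (Nat.succ_ne_zero _)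
  have hb0 : 0 < b := by positivity
  have hb1 : b < 1 := Real.rpow_lt_one (by norm_num) (by norm_num) (by positivity)
  refine ⟨b, ⟨hb0, hb1⟩, ?_⟩
  have htwo := sum_pow_L_one_le_tsum hr hℓ hb0.le hb1 {0, 1}
  rw [Finset.sum_pair zero_ne_one, L_one_zero hr, zero_add, pow_one] at htwo
  have hbMb : b ^ M ≤ b := pow_le_of_le_one hb0.le hb1.le (Nat.succ_ne_zero _)
  have hq' : (2 : ℝ) ≤ q := by exact_mod_cast hq
  calc (1 : ℝ) ≤ b + b ^ M := by linarith
    _ ≤ ∑' j : ℕ, ∑ i ∈ Finset.Icc 1 ℓ, b ^ (L ℓ r i j + 1) := htwo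
    _ ≤ v q ℓ r b := le_mul_of_one_le_left
        (tsum_nonneg fun _ => Finset.sum_nonneg fun _ _ => pow_nonneg hb0.le _) (by linarith)

end Series

/-- the series defining `v_{q,ℓ,r}` converges on `[0,1)`, the equation
`v_{q,ℓ,r}(x) = 1` has exactly one solution `ρ` in `(0,1)`, and this solution satisfies
`1/q ≤ ρ ≤ 1/(q−1)`. -/
theorem stmt12 (q ℓ r : ℕ) (hq : 2 ≤ q) (hℓ : 1 ≤ ℓ) (hr : 1 ≤ r) :
    (∀ x : ℝ, 0 ≤ x → x < 1 →
      Summable (fun j : ℕ => ∑ i ∈ Finset.Icc 1 ℓ, x ^ (L ℓ r i j + 1))) ∧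
    (∃! ρ : ℝ, ρ ∈ Set.Ioo (0 : ℝ) 1 ∧ v q ℓ r ρ = 1) ∧
    (∀ ρ ∈ Set.Ioo (0 : ℝ) 1, v q ℓ r ρ = 1 →
      1 / (q : ℝ) ≤ ρ ∧ ρ ≤ 1 / ((q : ℝ) - 1)) := by
  have hq' : (1 : ℝ) < q := by exact_mod_cast hq
  have hmono := strictMonoOn_v hq hr hℓ
  have hq0 : (0 : ℝ) < 1 / q := by positivity
  have hqmem : 1 / (q : ℝ) ∈ Set.Ico 0 1 := ⟨hq0.le, (div_lt_one (by positivity)).2 hq'⟩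
  have hva := v_one_div_le_one hq hr hℓ
  obtain ⟨b, hb, hvb⟩ := exists_one_le_v hq hr hℓ
  have hqb : 1 / (q : ℝ) ≤ b := (hmono.le_iff_le hqmem ⟨hb.1.le, hb.2⟩).1 (hva.trans hvb)
  obtain ⟨ρ, hρ, hvρ⟩ := intermediate_value_Icc hqb
    ((continuousOn_v hr hℓ hb.1.le hb.2).mono (Set.Icc_subset_Icc_left hq0.le)) ⟨hva, hvb⟩
  refine ⟨fun x => summable_sum_pow_L hr hℓ,
    ⟨ρ, ⟨⟨hq0.trans_le hρ.1, hρ.2.trans_lt hb.2⟩, hvρ⟩, fun σ ⟨hσ, hvσ⟩ => ?_⟩,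
    fun σ hσ hvσ => ⟨?_, ?_⟩⟩
  · exact hmono.injOn ⟨hσ.1.le, hσ.2⟩ ⟨(hq0.trans_le hρ.1).le, hρ.2.trans_lt hb.2⟩
      (hvσ.trans hvρ.symm)
  · exact (hmono.le_iff_le hqmem ⟨hσ.1.le, hσ.2⟩).1 (hva.trans hvσ.symm.le)
  · rw [le_div_iff₀ (by linarith)]
    linarith [mul_le_v (q := q) (by omega) hr hℓ hσ.1.le hσ.2]

end ZeroErrorDup
end
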